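/- Let U be a thick triangulated subcategory of a direct sum of triangulated categories D = ⊕_{j ∈ Λ} D_j. If U is connected (nonzero and admits no decomposition into two nonzero triangulated subcategories with no morphisms between them), then U is contained in D_j for some j ∈ Λ. -/

import Mathlib

/-!
STATEMENT 2: A connected thick triangulated subcategory `U` of a direct sum
`D = ⊕_{j ∈ Λ} D_j` of triangulated categories is contained in `D_j` for some `j`.
The direct sum is formalized internally: a family of triangulated subcategories `S j`
of an ambient pretriangulated category `D`, pairwise Hom-orthogonal, such that every
object of `D` is a finite direct sum of objects of the `S j`.
-/

open CategoryTheory Limits Pretriangulated Triangulated ZeroObject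

universe v u

variable {D : Type u} [Category.{v} D] [HasZeroObject D] [HasShift D ℤ] [Preadditive D]
  [∀ n : ℤ, (shiftFunctor D n).Additive] [Pretriangulated D]

namespace CategoryTheory.Triangulated

variable (D) in
/-- The structure `Triangulated.Subcategory` as it stood in Mathlib (December 2024). -/
structure Subcategory where
  P : D → Prop
  zero' : ∃ (Z : D) (_ : IsZero Z), P Z
  shift (X : D) (n : ℤ) : P X → P (X⟦n⟧)
  ext₂' (T : Triangle D) (_ : T ∈ distTriang D) : P T.obj₁ → P T.obj₃ →
    ObjectProperty.isoClosure P T.obj₂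

end CategoryTheory.Triangulated

/-- The iterated binary biproduct of a list of objects. -/
noncomputable def sumList : List D → D
  | [] => 0
  | X :: l => X ⊞ sumList l

/-- A triangulated subcategory is thick if it is closed under direct summands. -/
def IsThick (S : Triangulated.Subcategory D) : Prop :=
  ∀ (X Y Z : D), Nonempty (Z ≅ X ⊞ Y) → S.P Z → S.P X

/-- There are no nonzero morphisms from objects satisfying `P` to objects satisfying `Q`. -/
def HomOrth (P Q : D → Prop) : Prop :=
  ∀ ⦃X Y : D⦄ (f : X ⟶ Y), P X → Q Y → f = 0

/-- The class of objects `P` (e.g. the objects of a triangulated subcategory) is connected: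
it contains a nonzero object, and for any two triangulated subcategories `S₁, S₂` contained
in `P`, with no morphisms between them in either direction, such that every object of `P`
decomposes as a direct sum of an object of `S₁` and an object of `S₂`, one of `S₁`, `S₂`
consists of zero objects only. -/
def IsConnectedP (P : D → Prop) : Prop :=
  (∃ X : D, P X ∧ ¬ IsZero X) ∧
  ∀ S₁ S₂ : Triangulated.Subcategory D,
    (∀ X, S₁.P X → P X) → (∀ X, S₂.P X → P X) →
    HomOrth S₁.P S₂.P → HomOrth S₂.P S₁.P →
    (∀ X, P X → ∃ X₁ X₂, S₁.P X₁ ∧ S₂.P X₂ ∧ Nonempty (X ≅ X₁ ⊞ X₂)) →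
    (∀ X, S₁.P X → IsZero X) ∨ (∀ X, S₂.P X → IsZero X)

/-- The family of triangulated subcategories `S j` realizes the ambient category as the
direct sum `⊕_j S j`. -/
def IsDirectSumDecomp {ι : Type*} (S : ι → Triangulated.Subcategory D) : Prop :=
  (∀ i, ObjectProperty.IsClosedUnderIsomorphisms (S i).P) ∧
  (∀ i j, i ≠ j → HomOrth (S i).P (S j).P) ∧
  (∀ X : D, ∃ l : List D, (∀ Y ∈ l, ∃ i, (S i).P Y) ∧ Nonempty (X ≅ sumList l))

/-!
Fix a nonzero object of `U` and a nonzero summand `Y` of it lying in some `D_j`; by thickness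
`Y ∈ U`. Every object of `D` splits as `X₁ ⊞ X₂` with `X₁ ∈ D_j` and `X₂` Hom-orthogonal to `D_j`
in both directions (collect the summands of `X` lying in `D_j`), and thickness keeps both parts
in `U` when `X ∈ U`. So `U` is the orthogonal sum of `U ∩ D_j` and `U ∩ D_j^⊥`; the first contains
`Y`, hence by connectedness the second is zero and `U ⊆ D_j`.
-/

open ObjectProperty

@[simp] lemma sumList_cons (X : D) (l : List D) : sumList (X :: l) = (X ⊞ sumList l) := rfl

lemma isZero_sumList : ∀ {l : List D}, (∀ Y ∈ l, IsZero Y) → IsZero (sumList l)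
  | [], _ => isZero_zero D
  | X :: l, h => by
    rw [sumList_cons, biprod_isZero_iff]
    exact ⟨h X List.mem_cons_self, isZero_sumList fun Y hY => h Y (List.mem_cons_of_mem _ hY)⟩

lemma nonempty_sumList_iso_filter (p : D → Bool) :
    ∀ l : List D, Nonempty (sumList l ≅ sumList (l.filter p) ⊞ sumList (l.filter (!p ·)))
  | [] => ⟨(isZero_zero D).iso ((biprod_isZero_iff _ _).2 ⟨isZero_zero D, isZero_zero D⟩)⟩
  | X :: l => by
    obtain ⟨e⟩ := nonempty_sumList_iso_filter p l
    cases hX : p X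
    · simp only [List.filter_cons, hX, sumList_cons]
      exact ⟨biprod.mapIso (Iso.refl X) e ≪≫ (biprod.associator _ _ _).symm ≪≫
        biprod.mapIso (biprod.braiding _ _) (Iso.refl _) ≪≫ biprod.associator _ _ _⟩
    · simp only [List.filter_cons, hX, sumList_cons]
      exact ⟨biprod.mapIso (Iso.refl X) e ≪≫ (biprod.associator _ _ _).symm⟩

namespace CategoryTheory.Triangulated.Subcategory

variable (T : Subcategory D)

lemma prop_of_isZero [IsClosedUnderIsomorphisms T.P] {Z : D} (hZ : IsZero Z) : T.P Z := by
  obtain ⟨Z', hZ', h⟩ := T.zero'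
  exact prop_of_iso T.P (hZ'.iso hZ) h

lemma ext₂ [IsClosedUnderIsomorphisms T.P] (Tr : Triangle D) (hTr : Tr ∈ distTriang D)
    (h₁ : T.P Tr.obj₁) (h₃ : T.P Tr.obj₃) : T.P Tr.obj₂ := by
  obtain ⟨Y, hY, ⟨e⟩⟩ := T.ext₂' Tr hTr h₁ h₃
  exact prop_of_iso T.P e.symm hY

lemma prop_biprod [IsClosedUnderIsomorphisms T.P] {X Y : D} (hX : T.P X) (hY : T.P Y) :
    T.P (X ⊞ Y) :=
  T.ext₂ _ (binaryBiproductTriangle_distinguished X Y) hX hY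

lemma prop_sumList [IsClosedUnderIsomorphisms T.P] :
    ∀ {l : List D}, (∀ Y ∈ l, T.P Y) → T.P (sumList l)
  | [], _ => T.prop_of_isZero (isZero_zero D)
  | X :: _, h => T.prop_biprod (h X List.mem_cons_self)
      (prop_sumList fun Y hY => h Y (List.mem_cons_of_mem _ hY))

def inf (U : Subcategory D) [IsClosedUnderIsomorphisms T.P] : Subcategory D where
  P X := U.P X ∧ T.P X
  zero' := by
    obtain ⟨Z, hZ, h⟩ := U.zero'
    exact ⟨Z, hZ, h, T.prop_of_isZero hZ⟩
  shift X n h := ⟨U.shift X n h.1, T.shift X n h.2⟩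
  ext₂' Tr hTr h₁ h₃ := by
    obtain ⟨Y, hY, ⟨e⟩⟩ := U.ext₂' Tr hTr h₁.1 h₃.1
    exact ⟨Y, ⟨hY, prop_of_iso T.P e (T.ext₂ Tr hTr h₁.2 h₃.2)⟩, ⟨e⟩⟩

end CategoryTheory.Triangulated.Subcategory

def Perp (Q : D → Prop) (X : D) : Prop :=
  ∀ W : D, Q W → (∀ f : X ⟶ W, f = 0) ∧ (∀ f : W ⟶ X, f = 0)

lemma perp_of_isZero (Q : D → Prop) {X : D} (hX : IsZero X) : Perp Q X :=
  fun _ _ => ⟨fun f => hX.eq_of_src f 0, fun f => hX.eq_of_tgt f 0⟩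

lemma perp_shift {Q : D → Prop} (hQ : ∀ (X : D) (n : ℤ), Q X → Q (X⟦n⟧))
    {X : D} (hX : Perp Q X) (n : ℤ) : Perp Q (X⟦n⟧) := by
  intro W hW
  have hXW := hX (W⟦-n⟧) (hQ W (-n) hW)
  refine ⟨fun f => ?_, fun f => ?_⟩
  · have := hXW.1 ((shiftShiftNeg X n).inv ≫ f⟦-n⟧')
    rwa [Preadditive.IsIso.comp_left_eq_zero, Functor.map_eq_zero_iff] at this
  · have := hXW.2 (f⟦-n⟧' ≫ (shiftShiftNeg X n).hom)
    rwa [Preadditive.IsIso.comp_right_eq_zero, Functor.map_eq_zero_iff] at this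

lemma perp_obj₂ {Q : D → Prop} (Tr : Triangle D) (hTr : Tr ∈ distTriang D)
    (h₁ : Perp Q Tr.obj₁) (h₃ : Perp Q Tr.obj₃) : Perp Q Tr.obj₂ := by
  intro W hW
  refine ⟨fun f => ?_, fun f => ?_⟩
  · obtain ⟨g, rfl⟩ := Triangle.yoneda_exact₂ Tr hTr f ((h₁ W hW).1 _)
    rw [(h₃ W hW).1 g, comp_zero]
  · obtain ⟨g, rfl⟩ := Triangle.coyoneda_exact₂ Tr hTr f ((h₃ W hW).2 _)
    rw [(h₁ W hW).2 g, zero_comp]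

lemma homOrth_self_perp (Q : D → Prop) : HomOrth Q (Perp Q) := fun _ _ f hX hY => (hY _ hX).2 f

lemma homOrth_perp_self (Q : D → Prop) : HomOrth (Perp Q) Q := fun _ _ f hX hY => (hX _ hY).1 f

namespace CategoryTheory.Triangulated.Subcategory

def perp (T : Subcategory D) : Subcategory D where
  P := Perp T.P
  zero' := ⟨0, isZero_zero D, perp_of_isZero _ (isZero_zero D)⟩
  shift _ n h := perp_shift T.shift h n
  ext₂' Tr hTr h₁ h₃ := le_isoClosure _ _ (perp_obj₂ Tr hTr h₁ h₃)

instance (T : Subcategory D) : IsClosedUnderIsomorphisms T.perp.P where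
  of_iso e h W hW :=
    ⟨fun f => by simpa using e.inv ≫= (h W hW).1 (e.hom ≫ f),
      fun f => by simpa using (h W hW).2 (f ≫ e.inv) =≫ e.hom⟩

end CategoryTheory.Triangulated.Subcategory

namespace IsThick

variable {U : Triangulated.Subcategory D}

lemma isClosedUnderIsomorphisms (hU : IsThick U) : IsClosedUnderIsomorphisms U.P where
  of_iso {_ Y} e h := hU Y 0 _ ⟨e ≪≫ isoBiprodZero (isZero_zero D)⟩ h

lemma prop_snd (hU : IsThick U) {X Y Z : D} (e : Z ≅ X ⊞ Y) (hZ : U.P Z) : U.P Y :=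
  hU Y X Z ⟨e ≪≫ biprod.braiding X Y⟩ hZ

lemma prop_of_mem_sumList (hU : IsThick U) :
    ∀ {l : List D}, U.P (sumList l) → ∀ Y ∈ l, U.P Y
  | X :: _, h, Y, hY => by
    rcases List.mem_cons.1 hY with rfl | hY
    · exact hU _ _ _ ⟨Iso.refl _⟩ h
    · exact prop_of_mem_sumList hU (hU.prop_snd (Iso.refl _) h) Y hY

end IsThick

namespace IsDirectSumDecomp

variable {ι : Type*} {S : ι → Triangulated.Subcategory D}

lemma exists_prop_not_isZero (hS : IsDirectSumDecomp S) {U : Triangulated.Subcategory D}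
    (hU : IsThick U) {X : D} (hX : U.P X) (hX₀ : ¬ IsZero X) :
    ∃ j Y, U.P Y ∧ (S j).P Y ∧ ¬ IsZero Y := by
  have := hU.isClosedUnderIsomorphisms
  obtain ⟨l, hl, ⟨e⟩⟩ := hS.2.2 X
  obtain ⟨Y, hYl, hY⟩ : ∃ Y ∈ l, ¬ IsZero Y := by
    by_contra! h
    exact hX₀ ((isZero_sumList h).of_iso e)
  obtain ⟨j, hYj⟩ := hl Y hYl
  exact ⟨j, Y, hU.prop_of_mem_sumList (prop_of_iso U.P e hX) Y hYl, hYj, hY⟩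

lemma exists_iso_biprod_perp (hS : IsDirectSumDecomp S) (j : ι) (X : D) :
    ∃ X₁ X₂, (S j).P X₁ ∧ Perp (S j).P X₂ ∧ Nonempty (X ≅ X₁ ⊞ X₂) := by
  classical
  obtain ⟨l, hl, ⟨e⟩⟩ := hS.2.2 X
  have := hS.1 j
  obtain ⟨e'⟩ := nonempty_sumList_iso_filter (fun Y => decide ((S j).P Y)) l
  refine ⟨_, _, (S j).prop_sumList fun Y hY => ?_, (S j).perp.prop_sumList fun Y hY => ?_,
    ⟨e ≪≫ e'⟩⟩
  · simpa using (List.mem_filter.1 hY).2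
  · obtain ⟨hYl, hYj⟩ := List.mem_filter.1 hY
    obtain ⟨i, hYi⟩ := hl Y hYl
    have hij : i ≠ j := by
      rintro rfl
      simp_all
    exact fun W hW => ⟨fun f => hS.2.1 i j hij f hYi hW, fun f => hS.2.1 j i hij.symm f hW hYi⟩

end IsDirectSumDecomp

theorem stmt2_general {Λ : Type*} (S : Λ → Triangulated.Subcategory D)
    (hS : IsDirectSumDecomp S)
    (U : Triangulated.Subcategory D) (hUthick : IsThick U)
    (hUconn : IsConnectedP U.P) :
    ∃ j : Λ, ∀ X : D, U.P X → (S j).P X := by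
  have := hUthick.isClosedUnderIsomorphisms
  obtain ⟨⟨X₀, hX₀U, hX₀⟩, hconn⟩ := hUconn
  obtain ⟨j, Y, hYU, hYj, hY⟩ := hS.exists_prop_not_isZero hUthick hX₀U hX₀
  have := hS.1 j
  have hdecomp : ∀ X, U.P X → ∃ X₁ X₂, ((S j).inf U).P X₁ ∧ ((S j).perp.inf U).P X₂ ∧
      Nonempty (X ≅ X₁ ⊞ X₂) := fun X hX => by
    obtain ⟨X₁, X₂, h₁, h₂, ⟨e⟩⟩ := hS.exists_iso_biprod_perp j X
    exact ⟨X₁, X₂, ⟨hUthick _ _ _ ⟨e⟩ hX, h₁⟩, ⟨hUthick.prop_snd e hX, h₂⟩, ⟨e⟩⟩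
  rcases hconn ((S j).inf U) ((S j).perp.inf U) (fun _ h => h.1) (fun _ h => h.1)
      (fun _ _ f h₁ h₂ => homOrth_self_perp _ f h₁.2 h₂.2)
      (fun _ _ f h₂ h₁ => homOrth_perp_self _ f h₂.2 h₁.2) hdecomp with h | h
  · exact absurd (h Y ⟨hYU, hYj⟩) hY
  · refine ⟨j, fun X hX => ?_⟩
    obtain ⟨X₁, X₂, h₁, h₂, ⟨e⟩⟩ := hdecomp X hX
    exact prop_of_iso (S j).P (e ≪≫ (isoBiprodZero (h X₂ h₂)).symm).symm h₁.2

theorem stmt2 {Λ : Type*} (S : Λ → Triangulated.Subcategory D)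
    (hS : IsDirectSumDecomp S) (hSthick : ∀ j, IsThick (S j))
    (U : Triangulated.Subcategory D) (hUthick : IsThick U)
    (hUconn : IsConnectedP U.P) :
    ∃ j : Λ, ∀ X : D, U.P X → (S j).P X :=
  stmt2_general S hS U hUthick hUconn
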